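/- Let S be a subset of ℝⁿ and x ∈ S. The linear map from T_xS to ℝⁿ sending a point derivation v to the vector (v(q_1), …, v(q_n)), where q_i is the restriction to S of the i-th coordinate function on ℝⁿ, is injective. Consequently dim T_xS ≤ n. -/

import Mathlib

noncomputable section

/-- `C^∞(S)`: the `ℝ`-algebra of functions `f : S → ℝ` that locally extend to smooth
functions on `ℝⁿ`. -/
def Csm (n : ℕ) (S : Set (Fin n → ℝ)) : Subalgebra ℝ (S → ℝ) where
  carrier := {f | ∀ x : S, ∃ U : Set (Fin n → ℝ), IsOpen U ∧ (x : Fin n → ℝ) ∈ U ∧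
      ∃ F : (Fin n → ℝ) → ℝ, ContDiff ℝ (⊤ : ℕ∞) F ∧ ∀ y : S, (y : Fin n → ℝ) ∈ U → f y = F y}
  mul_mem' := by
    intro f g hf hg x
    obtain ⟨U, hU, hxU, F, hF, hFf⟩ := hf x
    obtain ⟨V, hV, hxV, G, hG, hGg⟩ := hg x
    exact ⟨U ∩ V, hU.inter hV, ⟨hxU, hxV⟩, F * G, hF.mul hG,
      fun y hy => by simp [Pi.mul_apply, hFf y hy.1, hGg y hy.2]⟩
  add_mem' := by
    intro f g hf hg x
    obtain ⟨U, hU, hxU, F, hF, hFf⟩ := hf x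
    obtain ⟨V, hV, hxV, G, hG, hGg⟩ := hg x
    exact ⟨U ∩ V, hU.inter hV, ⟨hxU, hxV⟩, F + G, hF.add hG,
      fun y hy => by simp [Pi.add_apply, hFf y hy.1, hGg y hy.2]⟩
  one_mem' := by
    intro x
    exact ⟨Set.univ, isOpen_univ, trivial, 1, contDiff_const, fun y _ => rfl⟩
  zero_mem' := by
    intro x
    exact ⟨Set.univ, isOpen_univ, trivial, 0, contDiff_const, fun y _ => rfl⟩
  algebraMap_mem' := by
    intro r x
    exact ⟨Set.univ, isOpen_univ, trivial, fun _ => r, contDiff_const, fun y _ => rfl⟩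

/-- `R(S)`: the `ℝ`-algebra of restrictions to `S` of smooth functions on `ℝⁿ`. -/
def Rres (n : ℕ) (S : Set (Fin n → ℝ)) : Subalgebra ℝ (S → ℝ) where
  carrier := {f | ∃ F : (Fin n → ℝ) → ℝ, ContDiff ℝ (⊤ : ℕ∞) F ∧ ∀ y : S, f y = F y}
  mul_mem' := by
    rintro f g ⟨F, hF, hFf⟩ ⟨G, hG, hGg⟩
    exact ⟨F * G, hF.mul hG, fun y => by simp [Pi.mul_apply, hFf y, hGg y]⟩
  add_mem' := by
    rintro f g ⟨F, hF, hFf⟩ ⟨G, hG, hGg⟩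
    exact ⟨F + G, hF.add hG, fun y => by simp [Pi.add_apply, hFf y, hGg y]⟩
  one_mem' := ⟨1, contDiff_const, fun _ => rfl⟩
  zero_mem' := ⟨0, contDiff_const, fun _ => rfl⟩
  algebraMap_mem' := fun r => ⟨fun _ => r, contDiff_const, fun _ => rfl⟩

/-- `C^∞(ℝⁿ)`: the `ℝ`-algebra of smooth functions on `ℝⁿ`. -/
def CsmAll (n : ℕ) : Subalgebra ℝ ((Fin n → ℝ) → ℝ) where
  carrier := {F | ContDiff ℝ (⊤ : ℕ∞) F}
  mul_mem' := fun {F G} (hF : ContDiff ℝ (⊤ : ℕ∞) F) (hG : ContDiff ℝ (⊤ : ℕ∞) G) => hF.mul hG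
  add_mem' := fun {F G} (hF : ContDiff ℝ (⊤ : ℕ∞) F) (hG : ContDiff ℝ (⊤ : ℕ∞) G) => hF.add hG
  one_mem' := show ContDiff ℝ (⊤ : ℕ∞) (1 : (Fin n → ℝ) → ℝ) from contDiff_const
  zero_mem' := show ContDiff ℝ (⊤ : ℕ∞) (0 : (Fin n → ℝ) → ℝ) from contDiff_const
  algebraMap_mem' := fun r => show ContDiff ℝ (⊤ : ℕ∞) (fun _ => r) from contDiff_const

/-- A point derivation at `x` of an algebra `A` of real-valued functions on `X`. -/
def IsPtDeriv {X : Type*} (A : Subalgebra ℝ (X → ℝ)) (x : X) (v : A →ₗ[ℝ] ℝ) : Prop :=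
  ∀ f g : A, v (f * g) = v f * (g : X → ℝ) x + (f : X → ℝ) x * v g

/-- The tangent space `T_x S`: the vector space of point derivations of `C^∞(S)` at `x`. -/
def TangentAt (n : ℕ) (S : Set (Fin n → ℝ)) (x : S) :
    Submodule ℝ ((Csm n S) →ₗ[ℝ] ℝ) where
  carrier := {v | IsPtDeriv (Csm n S) x v}
  add_mem' := by
    intro v w hv hw f g
    simp only [LinearMap.add_apply, hv f g, hw f g]
    ring
  zero_mem' := by
    intro f g
    simp
  smul_mem' := by
    intro c v hv f g
    simp only [LinearMap.smul_apply, hv f g, smul_eq_mul]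
    ring

/-- A smooth map between subsets of Euclidean spaces: it locally extends to a smooth
map of the ambient Euclidean spaces. -/
def SmoothMapSub (n m : ℕ) (S : Set (Fin n → ℝ)) (T : Set (Fin m → ℝ)) (φ : S → T) : Prop :=
  ∀ x : S, ∃ U : Set (Fin n → ℝ), IsOpen U ∧ (x : Fin n → ℝ) ∈ U ∧
    ∃ Φ : (Fin n → ℝ) → (Fin m → ℝ), ContDiff ℝ (⊤ : ℕ∞) Φ ∧
      ∀ y : S, (y : Fin n → ℝ) ∈ U → ((φ y : Fin m → ℝ)) = Φ y

/-- Two subsets of Euclidean spaces are diffeomorphic: there is a smooth bijection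
with smooth inverse. -/
def DiffeoSubsets (n m : ℕ) (A : Set (Fin n → ℝ)) (B : Set (Fin m → ℝ)) : Prop :=
  ∃ (φ : A → B) (ψ : B → A), SmoothMapSub n m A B φ ∧ SmoothMapSub m n B A ψ ∧
    Function.LeftInverse ψ φ ∧ Function.RightInverse ψ φ

/-- The structural dimension of `S` at `x`: the smallest `m` such that some open
neighbourhood of `x` in `S` (subspace topology) is diffeomorphic to a subset of `ℝ^m`. -/
def structDimAt (n : ℕ) (S : Set (Fin n → ℝ)) (x : Fin n → ℝ) : ℕ :=
  sInf {m | ∃ U : Set (Fin n → ℝ), x ∈ U ∧ (∃ W, IsOpen W ∧ U = W ∩ S) ∧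
    ∃ V : Set (Fin m → ℝ), DiffeoSubsets n m U V}

/-- `x` is a structurally regular point of `S` if the structural dimension is constant
on some open neighbourhood of `x` in `S`. -/
def StructRegular (n : ℕ) (S : Set (Fin n → ℝ)) (x : Fin n → ℝ) : Prop :=
  ∃ W : Set (Fin n → ℝ), IsOpen W ∧ x ∈ W ∧
    ∀ y ∈ W ∩ S, structDimAt n S y = structDimAt n S x

/-- The restriction to `S` of the `i`-th coordinate function, as an element of `C^∞(S)`. -/
def coordFn (n : ℕ) (S : Set (Fin n → ℝ)) (i : Fin n) : Csm n S :=
  ⟨fun y => (y : Fin n → ℝ) i, fun _ => ⟨Set.univ, isOpen_univ, trivial, fun z => z i,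
    contDiff_pi.mp contDiff_id i, fun _ _ => rfl⟩⟩

/-- The restriction to `S` of a globally smooth function belongs to `C^∞(S)`. -/
theorem restrict_mem_Csm {n : ℕ} (S : Set (Fin n → ℝ)) {F : (Fin n → ℝ) → ℝ}
    (hF : ContDiff ℝ (⊤ : ℕ∞) F) : (fun y : S => F y) ∈ Csm n S :=
  fun _ => ⟨Set.univ, isOpen_univ, trivial, F, hF, fun _ _ => rfl⟩

open MeasureTheory intervalIntegral Metric

set_option synthInstance.maxHeartbeats 400000
set_option maxHeartbeats 1000000


lemma hasFDerivAt_lineInt {m : ℕ} {E : Type} [NormedAddCommGroup E] [NormedSpace ℝ E]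
    (x : Fin m → ℝ) (w : ℝ → ℝ) (hw : Continuous w) (K : (Fin m → ℝ) → E)
    (hK : ContDiff ℝ (⊤ : ℕ∞) K) (z₀ : Fin m → ℝ) :
    HasFDerivAt (fun z : Fin m → ℝ => ∫ t in (0:ℝ)..1, w t • K (x + t • z))
      (∫ t in (0:ℝ)..1, (t * w t) • fderiv ℝ K (x + t • z₀)) z₀ := by
  have hK' : Continuous (fderiv ℝ K) := (hK.fderiv_right (m := ((⊤:ℕ∞) : WithTop ℕ∞)) (by norm_num)).continuous
  have hKc : Continuous K := hK.continuous
  have hdiffK : Differentiable ℝ K := hK.differentiable (by simp)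
  obtain ⟨C, hC⟩ := ((isCompact_Icc (a := (-1:ℝ)) (b := 2)).prod
      (isCompact_closedBall z₀ 1)).exists_bound_of_continuousOn
      (f := fun p : ℝ × (Fin m → ℝ) => (p.1 * w p.1) • fderiv ℝ K (x + p.1 • p.2))
      (by fun_prop)
  have key := intervalIntegral.hasFDerivAt_integral_of_dominated_of_fderiv_le
    (𝕜 := ℝ)
    (F := fun (z : Fin m → ℝ) t => w t • K (x + t • z))
    (F' := fun (z : Fin m → ℝ) t => (t * w t) • fderiv ℝ K (x + t • z))
    (μ := volume) (x₀ := z₀) (bound := fun _ => C) (a := 0) (b := 1)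
    (s := ball z₀ 1) (ball_mem_nhds z₀ one_pos)
    ?_ ?_ ?_ ?_ ?_ ?_
  · exact key
  · filter_upwards with z
    exact (Continuous.aestronglyMeasurable (by fun_prop)).restrict
  · exact (Continuous.intervalIntegrable (by fun_prop) 0 1)
  · exact (Continuous.aestronglyMeasurable (by fun_prop)).restrict
  · filter_upwards with t ht z hz
    have h01 : t ∈ Set.Icc (-1:ℝ) 2 := by
      rw [Set.uIoc_of_le (by norm_num : (0:ℝ) ≤ 1)] at ht
      constructor <;> [linarith [ht.1]; linarith [ht.2]]
    exact hC (t, z) ⟨h01, ball_subset_closedBall hz⟩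
  · exact intervalIntegrable_const
  · filter_upwards with t ht z hz
    have h1 : HasFDerivAt (fun z : Fin m → ℝ => x + t • z)
        (t • ContinuousLinearMap.id ℝ (Fin m → ℝ)) z :=
      ((hasFDerivAt_id z).const_smul t).const_add x
    have h3 := ((hdiffK (x + t • z)).hasFDerivAt.comp z h1).const_smul (w t)
    convert h3 using 1
    ext u
    simp [smul_smul, mul_comm]
    ext u
    simp [smul_smul, mul_comm]

lemma contDiff_nat_lineInt {m : ℕ} (x : Fin m → ℝ) :
    ∀ (k : ℕ) {E : Type} [NormedAddCommGroup E] [NormedSpace ℝ E]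
      (w : ℝ → ℝ), Continuous w → ∀ (K : (Fin m → ℝ) → E), ContDiff ℝ (⊤ : ℕ∞) K →
      ContDiff ℝ (k : ℕ) (fun z : Fin m → ℝ => ∫ t in (0:ℝ)..1, w t • K (x + t • z)) := by
  intro k
  induction k with
  | zero =>
    intro E _ _ w hw K hK
    rw [show ((0:ℕ) : WithTop ℕ∞) = 0 by norm_cast, contDiff_zero]
    exact continuous_iff_continuousAt.2 fun z =>
      (hasFDerivAt_lineInt x w hw K hK z).differentiableAt.continuousAt
  | succ k ih =>
    intro E _ _ w hw K hK
    rw [show ((k+1:ℕ) : WithTop ℕ∞) = (k : ℕ) + 1 by norm_cast, contDiff_succ_iff_fderiv]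
    refine ⟨fun z => (hasFDerivAt_lineInt x w hw K hK z).differentiableAt, by simp, ?_⟩
    have heq : (fderiv ℝ fun z : Fin m → ℝ => ∫ t in (0:ℝ)..1, w t • K (x + t • z)) =
        fun z : Fin m → ℝ => ∫ t in (0:ℝ)..1, (fun s => s * w s) t • (fderiv ℝ K) (x + t • z) := by
      funext z
      exact (hasFDerivAt_lineInt x w hw K hK z).fderiv
    rw [heq]
    exact ih (fun s => s * w s) (by fun_prop) (fderiv ℝ K)
      (hK.fderiv_right (m := ((⊤:ℕ∞) : WithTop ℕ∞)) (by norm_num))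

lemma contDiff_lineInt {m : ℕ} {E : Type} [NormedAddCommGroup E] [NormedSpace ℝ E]
    (x : Fin m → ℝ) (w : ℝ → ℝ) (hw : Continuous w) (K : (Fin m → ℝ) → E)
    (hK : ContDiff ℝ (⊤ : ℕ∞) K) :
    ContDiff ℝ (⊤ : ℕ∞) (fun z : Fin m → ℝ => ∫ t in (0:ℝ)..1, w t • K (x + t • z)) := by
  rw [contDiff_infty]
  exact fun k => contDiff_nat_lineInt x k w hw K hK

lemma hadamard {m : ℕ} {F : (Fin m → ℝ) → ℝ} (hF : ContDiff ℝ (⊤ : ℕ∞) F) (x : Fin m → ℝ) :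
    ∃ H : Fin m → (Fin m → ℝ) → ℝ, (∀ i, ContDiff ℝ (⊤ : ℕ∞) (H i)) ∧
      ∀ y, F y = F x + ∑ i, (y i - x i) * H i y := by
  set K : Fin m → (Fin m → ℝ) → ℝ := fun i u => (fderiv ℝ F u) (Pi.single i 1) with hKdef
  have hK : ∀ i, ContDiff ℝ (⊤ : ℕ∞) (K i) := fun i =>
    (hF.fderiv_right (m := ((⊤:ℕ∞) : WithTop ℕ∞)) (by norm_num)).clm_apply contDiff_const
  have hKcont : ∀ i, Continuous (K i) := fun i => (hK i).continuous
  have hdiffF : Differentiable ℝ F := hF.differentiable (by simp)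
  have hfdc : Continuous (fderiv ℝ F) :=
    (hF.fderiv_right (m := ((⊤:ℕ∞) : WithTop ℕ∞)) (by norm_num)).continuous
  refine ⟨fun i y => ∫ t in (0:ℝ)..1, (fun _ => (1:ℝ)) t • K i (x + t • (y - x)), fun i => ?_, ?_⟩
  · exact (contDiff_lineInt x (fun _ => 1) continuous_const (K i) (hK i)).comp
      (contDiff_id.sub contDiff_const)
  · intro y
    -- FTC along the segment
    have hderiv : ∀ t ∈ Set.uIcc (0:ℝ) 1,
        HasDerivAt (fun t : ℝ => F (x + t • (y - x)))
          ((fderiv ℝ F (x + t • (y - x))) (y - x)) t := by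
      intro t _
      have h1 : HasDerivAt (fun t : ℝ => x + t • (y - x)) (y - x) t := by
        simpa using ((hasDerivAt_id t).smul_const (y - x)).const_add x
      exact (hdiffF (x + t • (y - x))).hasFDerivAt.comp_hasDerivAt t h1
    have hint : IntervalIntegrable (fun t : ℝ => (fderiv ℝ F (x + t • (y - x))) (y - x))
        volume 0 1 := (Continuous.intervalIntegrable (by fun_prop) 0 1)
    have hftc := intervalIntegral.integral_eq_sub_of_hasDerivAt hderiv hint
    simp only [one_smul, zero_smul, add_zero] at hftc
    -- expand the derivative applied to y - x as a sum
    have hexp : ∀ t : ℝ, (fderiv ℝ F (x + t • (y - x))) (y - x)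
        = ∑ i, (y i - x i) * K i (x + t • (y - x)) := by
      intro t
      have hyx : (y - x) = ∑ i, ((y - x) i) • (Pi.single i (1:ℝ) : Fin m → ℝ) := by
        funext j
        simp [Pi.single_apply, Finset.sum_apply, mul_ite, Finset.sum_ite_eq', Pi.sub_apply]
      nth_rewrite 2 [hyx]
      rw [map_sum]
      simp [hKdef, smul_eq_mul]
    have : (∫ t in (0:ℝ)..1, (fderiv ℝ F (x + t • (y - x))) (y - x))
        = ∑ i, (y i - x i) * ∫ t in (0:ℝ)..1, K i (x + t • (y - x)) := by
      rw [intervalIntegral.integral_congr (g := fun t => ∑ i, (y i - x i) * K i (x + t • (y - x)))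
        (fun t _ => hexp t)]
      rw [intervalIntegral.integral_finset_sum (fun i _ =>
        (Continuous.intervalIntegrable (by fun_prop) 0 1))]
      exact Finset.sum_congr rfl fun i _ => intervalIntegral.integral_const_mul _ _
    rw [this] at hftc
    have hxy : x + (y - x) = y := by abel
    rw [hxy] at hftc
    simp only [one_smul]
    linarith [hftc]


section AlgPart

variable {n : ℕ} {S : Set (Fin n → ℝ)}

lemma ptDeriv_one (x : S) (v : Csm n S →ₗ[ℝ] ℝ) (hv : IsPtDeriv (Csm n S) x v) :
    v 1 = 0 := by
  have h := hv 1 1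
  simp only [mul_one, OneMemClass.coe_one, Pi.one_apply, one_mul] at h
  linarith

lemma ptDeriv_algebraMap (x : S) (v : Csm n S →ₗ[ℝ] ℝ) (hv : IsPtDeriv (Csm n S) x v)
    (r : ℝ) : v (algebraMap ℝ (Csm n S) r) = 0 := by
  rw [Algebra.algebraMap_eq_smul_one, LinearMap.map_smul, ptDeriv_one x v hv, smul_zero]

lemma ptDeriv_loc_vanish (x : S) (v : Csm n S →ₗ[ℝ] ℝ) (hv : IsPtDeriv (Csm n S) x v)
    (f : Csm n S) (U : Set (Fin n → ℝ)) (hU : IsOpen U) (hxU : (x : Fin n → ℝ) ∈ U)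
    (hf0 : ∀ y : S, (y : Fin n → ℝ) ∈ U → (f : S → ℝ) y = 0) : v f = 0 := by
  obtain ⟨ε, hε, hball⟩ := Metric.isOpen_iff.1 hU _ hxU
  let χ : ContDiffBump (x : Fin n → ℝ) := ⟨ε/2, ε, by positivity, by linarith⟩
  have hχsm : ContDiff ℝ (⊤ : ℕ∞) (χ : (Fin n → ℝ) → ℝ) := χ.contDiff
  let c : Csm n S := ⟨fun y => χ y, restrict_mem_Csm S hχsm⟩
  have hfc : f = (1 - c) * f := by
    apply Subtype.ext; funext y
    show (f : S → ℝ) y = (1 - χ y) * (f : S → ℝ) y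
    by_cases h : (y : Fin n → ℝ) ∈ Metric.ball (x : Fin n → ℝ) ε
    · rw [hf0 y (hball h)]; ring
    · have hz : χ y = 0 := χ.zero_of_le_dist (by
        simpa [Metric.mem_ball, not_lt] using h)
      rw [hz]; ring
  have hx1 : χ (x : Fin n → ℝ) = 1 :=
    χ.one_of_mem_closedBall (by simp [Metric.mem_closedBall]; positivity)
  have := hv (1 - c) f
  rw [← hfc] at this
  have hc1 : ((1 - c : Csm n S) : S → ℝ) x = 0 := by
    show 1 - χ (x : Fin n → ℝ) = 0
    rw [hx1]; ring
  rw [hc1, hf0 x hxU, mul_zero, zero_mul, add_zero] at this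
  exact this

lemma ptDeriv_vanish_of_coords (x : S) (v : Csm n S →ₗ[ℝ] ℝ)
    (hv : IsPtDeriv (Csm n S) x v) (hq : ∀ i, v (coordFn n S i) = 0) (f : Csm n S) :
    v f = 0 := by
  obtain ⟨U, hU, hxU, F, hF, hFf⟩ := f.2 x
  obtain ⟨H, hH, hHeq⟩ := hadamard hF (x : Fin n → ℝ)
  set Fr : Csm n S := ⟨fun y => F y, restrict_mem_Csm S hF⟩ with hFr
  have h1 : v (f - Fr) = 0 := by
    apply ptDeriv_loc_vanish x v hv (f - Fr) U hU hxU
    intro y hy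
    show (f : S → ℝ) y - (Fr : S → ℝ) y = 0
    rw [hFf y hy]
    show F y - F y = 0
    ring
  set hfun : Fin n → Csm n S := fun i =>
    ⟨fun y => H i ((y : Fin n → ℝ)), restrict_mem_Csm S (hH i)⟩ with hhfun
  have h2 : Fr = algebraMap ℝ (Csm n S) (F x) +
      ∑ i, (coordFn n S i - algebraMap ℝ (Csm n S) ((x : Fin n → ℝ) i)) * hfun i := by
    apply Subtype.ext; funext y
    have := hHeq (y : Fin n → ℝ)
    show F y = _
    rw [this]
    congr 1
    rw [show (((∑ i, (coordFn n S i - algebraMap ℝ (Csm n S) ((x : Fin n → ℝ) i)) * hfun i :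
        Csm n S)) : S → ℝ) = ∑ i, (((coordFn n S i - algebraMap ℝ (Csm n S)
        ((x : Fin n → ℝ) i)) * hfun i : Csm n S) : S → ℝ) from
      AddSubmonoidClass.coe_finset_sum _ _]
    rw [Finset.sum_apply]
    rfl
  have h3 : v Fr = 0 := by
    rw [h2, map_add, ptDeriv_algebraMap x v hv, map_sum, zero_add]
    apply Finset.sum_eq_zero
    intro i _
    rw [hv]
    have hp0 : ((coordFn n S i - algebraMap ℝ (Csm n S) ((x : Fin n → ℝ) i) : Csm n S) :
        S → ℝ) x = 0 := by
      show (x : Fin n → ℝ) i - (x : Fin n → ℝ) i = 0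
      ring
    rw [hp0, map_sub, hq i, ptDeriv_algebraMap x v hv]
    ring
  have := map_sub v f Fr
  rw [h1, h3] at this
  linarith

end AlgPart

/-- The map `T_x S → ℝⁿ`, `v ↦ (v q₁, …, v qₙ)`, is injective;
consequently `dim T_x S ≤ n`. -/
theorem tangentAt_coord_injective {n : ℕ} (S : Set (Fin n → ℝ)) (x : S) :
    Function.Injective
      (fun v : TangentAt n S x => fun i : Fin n => (v : Csm n S →ₗ[ℝ] ℝ) (coordFn n S i)) ∧
    Module.rank ℝ ↥(TangentAt n S x) ≤ n := by
  constructor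
  · intro v w h
    have hcoord : ∀ i, ((v : Csm n S →ₗ[ℝ] ℝ) - (w : Csm n S →ₗ[ℝ] ℝ)) (coordFn n S i) = 0 := by
      intro i
      have := congrFun h i
      simp only [LinearMap.sub_apply]
      simp only at this
      rw [this]; ring
    have hd : IsPtDeriv (Csm n S) x ((v : Csm n S →ₗ[ℝ] ℝ) - (w : Csm n S →ₗ[ℝ] ℝ)) :=
      (TangentAt n S x).sub_mem v.2 w.2
    have hall : ∀ f, ((v : Csm n S →ₗ[ℝ] ℝ) - (w : Csm n S →ₗ[ℝ] ℝ)) f = 0 :=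
      fun f => ptDeriv_vanish_of_coords x _ hd hcoord f
    apply Subtype.ext
    apply LinearMap.ext
    intro f
    have := hall f
    simp only [LinearMap.sub_apply] at this
    linarith
  · set L : ↥(TangentAt n S x) →ₗ[ℝ] (Fin n → ℝ) :=
      { toFun := fun v => fun i => (v : Csm n S →ₗ[ℝ] ℝ) (coordFn n S i)
        map_add' := by intro a b; funext i; simp
        map_smul' := by intro r a; funext i; simp } with hL
    have hinj : Function.Injective L := by
      intro v w h
      have hcoord : ∀ i, ((v : Csm n S →ₗ[ℝ] ℝ) - (w : Csm n S →ₗ[ℝ] ℝ)) (coordFn n S i) = 0 := by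
        intro i
        have := congrFun h i
        simp only [hL, LinearMap.coe_mk, AddHom.coe_mk] at this
        simp only [LinearMap.sub_apply]
        rw [this]; ring
      have hd : IsPtDeriv (Csm n S) x ((v : Csm n S →ₗ[ℝ] ℝ) - (w : Csm n S →ₗ[ℝ] ℝ)) :=
        (TangentAt n S x).sub_mem v.2 w.2
      have hall : ∀ f, ((v : Csm n S →ₗ[ℝ] ℝ) - (w : Csm n S →ₗ[ℝ] ℝ)) f = 0 :=
        fun f => ptDeriv_vanish_of_coords x _ hd hcoord f
      apply Subtype.ext
      apply LinearMap.ext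
      intro f
      have := hall f
      simp only [LinearMap.sub_apply] at this
      linarith
    calc Module.rank ℝ ↥(TangentAt n S x) ≤ Module.rank ℝ (Fin n → ℝ) :=
          LinearMap.rank_le_of_injective L hinj
      _ = n := rank_fin_fun n
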